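/- arXiv:1608.01803 — 2 statements merged into one kernel-verified Lean document; each statement's English description precedes it below -/
import Mathlib

section
/- Let μ₀ = μ₁ + μ₂ with μ₀ ≥ μ₁ having compact infinite supports, and β_n := γ_n(μ₁)/γ_n(μ₀) − 1. Then ‖p_n(μ₀,·) − p_n(μ₁,·)‖²_{L²(μ₀)} = ‖p_n(μ₁,·)‖²_{L²(μ₂)} − 2β_n. -/
open MeasureTheory Polynomial Filter

noncomputable section

/-- The (closed) support of a Borel measure on `ℂ`. -/
def msupp (μ : Measure ℂ) : Set ℂ := {z | ∀ U ∈ nhds z, μ U ≠ 0}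

/-- `p` is the sequence of orthonormal polynomials for `μ`:
`p n` has degree `n`, positive (real) leading coefficient, and
`⟪p m, p n⟫_μ = δ_{m n}`. -/
def ONP (μ : Measure ℂ) (p : ℕ → Polynomial ℂ) : Prop :=
  (∀ n, (p n).natDegree = n) ∧
  (∀ n, 0 < ((p n).leadingCoeff).re ∧ ((p n).leadingCoeff).im = 0) ∧
  (∀ m n, ∫ z, (p m).eval z * (starRingEnd ℂ) ((p n).eval z) ∂μ
      = if m = n then 1 else 0)

/-- The `n`-th Christoffel function of the measure `μ` at the point `z`. -/
def christoffel (μ : Measure ℂ) (n : ℕ) (z : ℂ) : ℝ :=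
  sInf {r : ℝ | ∃ P : Polynomial ℂ, P.natDegree ≤ n ∧ P.eval z = 1 ∧
      r = ∫ t, ‖P.eval t‖ ^ 2 ∂μ}

/-!
Expand `‖p₀ - p₁‖² = ‖p₀‖² + ‖p₁‖² - 2 Re (p₀ p̄₁)` pointwise and integrate against
`μ₀ = μ₁ + μ₂`: the first term gives `1`, the second `1 + ‖p₁‖²_{L²(μ₂)}`. In the cross term,
`p₀ = p_n(μ₀,·)` is orthogonal to every polynomial of degree `< n`, so `⟪p₀, p₁⟫_{μ₀}` only sees
the leading coefficient of `p₁` and equals `γ_n(μ₁)/γ_n(μ₀) = 1 + β_n`.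
-/

open ComplexConjugate

lemma msupp_eq_support (μ : Measure ℂ) : msupp μ = μ.support := by
  ext z
  simp [msupp, Measure.mem_support_iff_forall, pos_iff_ne_zero]

lemma Continuous.integrable_of_isCompact_msupp {μ : Measure ℂ} [IsFiniteMeasureOnCompacts μ]
    (hc : IsCompact (msupp μ)) {E : Type*} [NormedAddCommGroup E] {g : ℂ → E}
    (hg : Continuous g) : Integrable g μ := by
  have h := hg.continuousOn.integrableOn_compact (μ := μ) hc
  rwa [IntegrableOn, msupp_eq_support,
    Measure.restrict_eq_self_of_ae_mem (s := μ.support) Measure.support_mem_ae] at h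

namespace ONP

variable {μ : Measure ℂ} {p : ℕ → ℂ[X]}

lemma leadingCoeff_ne_zero (hp : ONP μ p) (n : ℕ) : (p n).leadingCoeff ≠ 0 := fun h => by
  simpa [h] using (hp.2.1 n).1

lemma leadingCoeff_eq_ofReal (hp : ONP μ p) (n : ℕ) :
    (p n).leadingCoeff = ((p n).leadingCoeff.re : ℂ) :=
  Complex.ext rfl (by simp [(hp.2.1 n).2])

def toSequence (hp : ONP μ p) : Sequence ℂ where
  elems' := p
  degree_eq' n := by
    rw [degree_eq_natDegree (Polynomial.leadingCoeff_ne_zero.mp (hp.leadingCoeff_ne_zero n)),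
      hp.1 n]

lemma coeff_self (hp : ONP μ p) (n : ℕ) : (p n).coeff n = (p n).leadingCoeff := by
  rw [leadingCoeff, hp.1 n]

lemma integral_norm_sq (hp : ONP μ p) (n : ℕ) : ∫ z, ‖(p n).eval z‖ ^ 2 ∂μ = 1 := by
  have h := hp.2.2 n n
  simp only [Complex.mul_conj', if_true, ← Complex.ofReal_pow, integral_complex_ofReal] at h
  exact_mod_cast h

variable [IsFiniteMeasureOnCompacts μ] (hc : IsCompact (msupp μ))
include hc

lemma integral_mul_conj_eq_zero_of_degree_lt (hp : ONP μ p) {n : ℕ} {q : ℂ[X]}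
    (hq : q.degree < n) :
    ∫ z, (p n).eval z * conj (q.eval z) ∂μ = 0 := by
  have hmem : q ∈ Submodule.span ℂ (hp.toSequence '' Set.Iio n) := by
    rw [Sequence.span_degreeLT _ fun i _ => (hp.leadingCoeff_ne_zero i).isUnit]
    exact mem_degreeLT.mpr hq
  clear hq
  induction hmem using Submodule.span_induction with
  | mem q hq =>
    obtain ⟨m, hm, rfl⟩ := hq
    exact (hp.2.2 n m).trans (if_neg (Set.mem_Iio.mp hm).ne')
  | zero => simp
  | add q r _ _ hq hr =>
    simp only [eval_add, map_add, mul_add]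
    rw [integral_add ((by fun_prop : Continuous _).integrable_of_isCompact_msupp hc)
      ((by fun_prop : Continuous _).integrable_of_isCompact_msupp hc), hq, hr, add_zero]
  | smul c q _ hq =>
    simp only [eval_smul, smul_eq_mul, map_mul, mul_left_comm _ (conj c)]
    rw [integral_const_mul, hq, mul_zero]

lemma integral_mul_conj_of_natDegree_le (hp : ONP μ p) {n : ℕ} {q : ℂ[X]}
    (hq : q.natDegree ≤ n) :
    ∫ z, (p n).eval z * conj (q.eval z) ∂μ = conj (q.coeff n / (p n).leadingCoeff) := by
  set c := q.coeff n / (p n).leadingCoeff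
  set r := q - C c * p n
  have hr : r.degree < n := by
    refine (degree_lt_iff_coeff_zero _ _).mpr fun m hm => ?_
    rcases hm.eq_or_lt with rfl | hm
    · simp [r, c, hp.coeff_self, hp.leadingCoeff_ne_zero]
    · simp [r, coeff_eq_zero_of_natDegree_lt (hq.trans_lt hm),
        coeff_eq_zero_of_natDegree_lt ((hp.1 n).trans_lt hm)]
  have hq_eq : q = C c * p n + r := by ring
  have hint : Integrable (fun z => conj c * ((p n).eval z * conj ((p n).eval z))) μ :=
    (by fun_prop : Continuous _).integrable_of_isCompact_msupp hc
  conv_lhs => rw [hq_eq]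
  simp only [eval_add, eval_mul, eval_C, map_add, map_mul, mul_add, mul_left_comm _ (conj c)]
  rw [integral_add hint ((by fun_prop : Continuous _).integrable_of_isCompact_msupp hc),
    integral_const_mul, hp.2.2 n n, if_pos rfl, integral_mul_conj_eq_zero_of_degree_lt hc hp hr,
    mul_one, add_zero]

end ONP

theorem stmt_8_general (μ0 μ1 μ2 : Measure ℂ) [IsFiniteMeasure μ1] [IsFiniteMeasure μ2]
    (hsum : μ0 = μ1 + μ2)
    (h0c : IsCompact (msupp μ0))
    (p0 p1 : ℕ → Polynomial ℂ) (hp0 : ONP μ0 p0) (hp1 : ONP μ1 p1)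
    (β : ℕ → ℝ)
    (hβ : ∀ n, β n = ((p1 n).leadingCoeff).re / ((p0 n).leadingCoeff).re - 1) :
    ∀ n : ℕ,
      (∫ z, ‖(p0 n).eval z - (p1 n).eval z‖ ^ 2 ∂μ0)
        = (∫ z, ‖(p1 n).eval z‖ ^ 2 ∂μ2) - 2 * β n := by
  subst hsum
  intro n
  have hint : ∀ g : ℂ → ℝ, Continuous g → Integrable g (μ1 + μ2) :=
    fun _ hg => hg.integrable_of_isCompact_msupp h0c
  have h11 : ∫ z, ‖(p1 n).eval z‖ ^ 2 ∂(μ1 + μ2) = 1 + ∫ z, ‖(p1 n).eval z‖ ^ 2 ∂μ2 := by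
    obtain ⟨hi1, hi2⟩ :=
      integrable_add_measure.mp (hint (fun z => ‖(p1 n).eval z‖ ^ 2) (by fun_prop))
    rw [integral_add_measure hi1 hi2, hp1.integral_norm_sq n]
  have h01 : ∫ z, ((p0 n).eval z * conj ((p1 n).eval z)).re ∂(μ1 + μ2) = 1 + β n := by
    have hi : Integrable (fun z => (p0 n).eval z * conj ((p1 n).eval z)) (μ1 + μ2) :=
      (by fun_prop : Continuous _).integrable_of_isCompact_msupp h0c
    calc _ = (∫ z, (p0 n).eval z * conj ((p1 n).eval z) ∂(μ1 + μ2)).re := integral_re hi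
      _ = 1 + β n := by
          rw [hp0.integral_mul_conj_of_natDegree_le h0c (hp1.1 n).le, hp1.coeff_self,
            hp0.leadingCoeff_eq_ofReal n, Complex.conj_re, Complex.div_ofReal_re, hβ n]
          ring
  calc ∫ z, ‖(p0 n).eval z - (p1 n).eval z‖ ^ 2 ∂(μ1 + μ2)
      = ∫ z, (‖(p0 n).eval z‖ ^ 2 + ‖(p1 n).eval z‖ ^ 2
          - 2 * ((p0 n).eval z * conj ((p1 n).eval z)).re) ∂(μ1 + μ2) := by
        simp only [Complex.sq_norm, Complex.normSq_sub]
    _ = 1 + (1 + ∫ z, ‖(p1 n).eval z‖ ^ 2 ∂μ2) - 2 * (1 + β n) := by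
        rw [integral_sub, integral_add, integral_const_mul, hp0.integral_norm_sq n, h11, h01]
        all_goals exact hint _ (by fun_prop)
    _ = (∫ z, ‖(p1 n).eval z‖ ^ 2 ∂μ2) - 2 * β n := by ring

/-- `‖p_n(μ₀,·) − p_n(μ₁,·)‖²_{L²(μ₀)} = ‖p_n(μ₁,·)‖²_{L²(μ₂)} − 2β_n`. -/
theorem stmt_8 (μ0 μ1 μ2 : Measure ℂ) [IsFiniteMeasure μ1] [IsFiniteMeasure μ2]
    (hsum : μ0 = μ1 + μ2) (hle : μ1 ≤ μ0)
    (h0c : IsCompact (msupp μ0)) (h0i : (msupp μ0).Infinite)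
    (h1c : IsCompact (msupp μ1)) (h1i : (msupp μ1).Infinite)
    (p0 p1 : ℕ → Polynomial ℂ) (hp0 : ONP μ0 p0) (hp1 : ONP μ1 p1)
    (β : ℕ → ℝ)
    (hβ : ∀ n, β n = ((p1 n).leadingCoeff).re / ((p0 n).leadingCoeff).re - 1) :
    ∀ n : ℕ,
      (∫ z, ‖(p0 n).eval z - (p1 n).eval z‖ ^ 2 ∂μ0)
        = (∫ z, ‖(p1 n).eval z‖ ^ 2 ∂μ2) - 2 * β n :=
  stmt_8_general μ0 μ1 μ2 hsum h0c p0 p1 hp0 hp1 β hβ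
end
end

section
/- Let μ be a finite Borel measure with compact infinite support S₁ in ℂ, and let K be a compact subset of the unbounded component Ω of the complement of S₁. Then the Christoffel functions satisfy λ_n(μ, z) → 0 uniformly for z ∈ K; equivalently, Σ_{n=0}^∞ |p_n(μ, z)|² = ∞ uniformly on K. -/
open MeasureTheory Polynomial Filter

noncomputable section

/-! Let `S` be the support of `μ` and `x` the coordinate function, viewed in the closure `A` of
the polynomials in `C(S, ℂ)`. The boundary of the spectrum of `x` in `A` lies in its spectrum `S`
in `C(S, ℂ)`, so the former is `S` together with some bounded components of `ℂ \ S`, and misses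
`Ω`. Hence for `z ∈ Ω` the function `(z - x)⁻¹` lies in `A`, i.e. is a uniform limit on `S` of
polynomials `P` (Runge's theorem), and `1 - (z - X) P` equals `1` at `z` and is uniformly small
on `S`. Normalising finitely many such polynomials, attached to a finite subcover of `K`, gives
polynomials of bounded degree that equal `1` at any prescribed point of `K` and are small on `S`;
they are competitors in the infimum defining the Christoffel function. -/

theorem spectrum_toContinuousMapOn_X (S : Set ℂ) :
    spectrum ℂ ((X : ℂ[X]).toContinuousMapOn S) = S := by
  rw [ContinuousMap.spectrum_eq_range]
  ext z
  simp

section PolynomialApproximation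

variable {S : Set ℂ}

theorem exists_mul_eq_one_mem_topologicalClosure_polynomialFunctions [CompactSpace S] {z : ℂ}
    (hz : ¬ Bornology.IsBounded (connectedComponentIn Sᶜ z)) :
    ∃ g ∈ (polynomialFunctions S).topologicalClosure,
      (algebraMap ℂ C(S, ℂ) z - (X : ℂ[X]).toContinuousMapOn S) * g = 1 := by
  set A := (polynomialFunctions S).topologicalClosure
  have : IsClosed (A : Set C(S, ℂ)) := Subalgebra.isClosed_topologicalClosure _
  let x : A := ⟨(X : ℂ[X]).toContinuousMapOn S,
    (polynomialFunctions S).le_topologicalClosure ⟨X, trivial, rfl⟩⟩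
  have hzx : z ∉ spectrum ℂ x := fun hzx => hz <| by
    simpa [x, spectrum_toContinuousMapOn_X] using
      Subalgebra.spectrum_isBounded_connectedComponentIn A x hzx
  obtain ⟨u, hu⟩ := spectrum.notMem_iff.mp hzx
  refine ⟨(u⁻¹ : Aˣ), (u⁻¹ : Aˣ).1.2, ?_⟩
  simpa [hu, x] using congrArg Subtype.val u.mul_inv

theorem exists_eval_eq_one_norm_lt (hS : IsCompact S) {z : ℂ}
    (hz : ¬ Bornology.IsBounded (connectedComponentIn Sᶜ z)) {δ : ℝ} (hδ : 0 < δ) :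
    ∃ Q : ℂ[X], Q.eval z = 1 ∧ ∀ t ∈ S, ‖Q.eval t‖ < δ := by
  have : CompactSpace S := isCompact_iff_compactSpace.mp hS
  obtain ⟨g, hgA, hg⟩ := exists_mul_eq_one_mem_topologicalClosure_polynomialFunctions hz
  set r := algebraMap ℂ C(S, ℂ) z - (X : ℂ[X]).toContinuousMapOn S
  obtain ⟨p, hp, hgp⟩ := Metric.mem_closure_iff.mp hgA (δ / (‖r‖ + 1)) (by positivity)
  obtain ⟨P, rfl⟩ : ∃ P : ℂ[X], P.toContinuousMapOnAlgHom S = p := by simpa using hp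
  refine ⟨1 - (C z - X) * P, by simp, fun t ht => ?_⟩
  have hQ : (1 - (C z - X) * P).toContinuousMapOnAlgHom S
      = r * (g - P.toContinuousMapOnAlgHom S) := by
    rw [mul_sub, hg, map_sub, map_mul, map_sub, ← algebraMap_eq, AlgHom.commutes, map_one]
    rfl
  calc ‖(1 - (C z - X) * P).eval t‖
      = ‖(1 - (C z - X) * P).toContinuousMapOnAlgHom S ⟨t, ht⟩‖ := rfl
    _ ≤ ‖r‖ * ‖g - P.toContinuousMapOnAlgHom S‖ := by
      rw [hQ]
      exact (ContinuousMap.norm_coe_le_norm _ _).trans (norm_mul_le _ _)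
    _ ≤ ‖r‖ * (δ / (‖r‖ + 1)) := by
      gcongr
      simpa only [dist_eq_norm] using hgp.le
    _ < δ := by
      rw [mul_div_assoc', div_lt_iff₀ (by positivity)]
      linarith

theorem exists_natDegree_le_eval_eq_one_norm_lt {K : Set ℂ} (hK : IsCompact K)
    (hKS : ∀ z ∈ K, ∀ δ > 0, ∃ Q : ℂ[X], Q.eval z = 1 ∧ ∀ t ∈ S, ‖Q.eval t‖ < δ)
    {δ : ℝ} (hδ : 0 < δ) :
    ∃ N, ∀ w ∈ K, ∃ Q : ℂ[X], Q.natDegree ≤ N ∧ Q.eval w = 1 ∧ ∀ t ∈ S, ‖Q.eval t‖ < δ := by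
  choose! Q hQz hQS using fun z hz => hKS z hz (δ / 2) (half_pos hδ)
  obtain ⟨F, hFK, hKF⟩ := hK.elim_nhds_subcover (fun z => {w | 1 / 2 < ‖(Q z).eval w‖})
    fun z hz => (isOpen_lt continuous_const (Q z).continuous.norm).mem_nhds <| by
      show 1 / 2 < ‖(Q z).eval z‖
      norm_num [hQz z hz]
  refine ⟨F.sup fun z => (Q z).natDegree, fun w hw => ?_⟩
  obtain ⟨z, hzF, hzw : 1 / 2 < ‖(Q z).eval w‖⟩ := Set.mem_iUnion₂.mp (hKF hw)
  have hQw : (Q z).eval w ≠ 0 := norm_pos_iff.mp (by linarith)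
  have hdeg : (Q z).natDegree ≤ F.sup fun z => (Q z).natDegree :=
    Finset.le_sup (f := fun z => (Q z).natDegree) hzF
  refine ⟨C ((Q z).eval w)⁻¹ * Q z, (natDegree_C_mul_le _ _).trans hdeg, by simp [hQw],
    fun t ht => ?_⟩
  have hQt := hQS z (hFK z hzF) t ht
  rw [eval_mul, eval_C, norm_mul, norm_inv, inv_mul_eq_div, div_lt_iff₀ (by linarith)]
  nlinarith

end PolynomialApproximation

theorem ae_mem_msupp (μ : Measure ℂ) : ∀ᵐ t ∂μ, t ∈ msupp μ := by
  refine measure_null_of_locally_null _ fun x hx => ?_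
  obtain ⟨U, hU, hU0⟩ : ∃ U ∈ nhds x, μ U = 0 := by simpa [msupp] using hx
  exact ⟨U, mem_nhdsWithin_of_mem_nhds hU, hU0⟩

theorem christoffel_nonneg (μ : Measure ℂ) (n : ℕ) (z : ℂ) : 0 ≤ christoffel μ n z := by
  refine Real.sInf_nonneg fun r ⟨P, _, _, hr⟩ => ?_
  rw [hr]
  exact integral_nonneg fun t => by positivity

theorem christoffel_le_of_norm_le (μ : Measure ℂ) [IsFiniteMeasure μ] {n : ℕ} {z : ℂ}
    {P : ℂ[X]} (hP : P.natDegree ≤ n) (hPz : P.eval z = 1) {c : ℝ}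
    (hc : ∀ t ∈ msupp μ, ‖P.eval t‖ ≤ c) :
    christoffel μ n z ≤ c ^ 2 * μ.real Set.univ := by
  have hbdd : BddBelow {r : ℝ | ∃ P : ℂ[X], P.natDegree ≤ n ∧ P.eval z = 1 ∧
      r = ∫ t, ‖P.eval t‖ ^ 2 ∂μ} :=
    ⟨0, fun r ⟨Q, _, _, hr⟩ => hr ▸ integral_nonneg fun t => by positivity⟩
  refine (csInf_le hbdd ⟨P, hP, hPz, rfl⟩).trans <| (Real.le_norm_self _).trans <|
    norm_integral_le_of_norm_le_const ?_
  filter_upwards [ae_mem_msupp μ] with t ht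
  rw [norm_pow, norm_norm]
  exact pow_le_pow_left₀ (norm_nonneg _) (hc t ht) 2

theorem stmt_14_general (μ : Measure ℂ) [IsFiniteMeasure μ]
    (hc : IsCompact (msupp μ))
    (Ω : Set ℂ) (z₀ : ℂ)
    (hΩ : Ω = connectedComponentIn (msupp μ)ᶜ z₀)
    (hΩunb : ¬ Bornology.IsBounded Ω)
    (K : Set ℂ) (hK : IsCompact K) (hKΩ : K ⊆ Ω) :
    TendstoUniformlyOn (fun n z => christoffel μ n z) (fun _ => 0) atTop K := by
  have hKS : ∀ z ∈ K, ∀ δ > 0, ∃ Q : ℂ[X], Q.eval z = 1 ∧ ∀ t ∈ msupp μ, ‖Q.eval t‖ < δ :=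
    fun z hz δ hδ => exists_eval_eq_one_norm_lt hc
      (by rwa [← connectedComponentIn_eq (hΩ ▸ hKΩ hz), ← hΩ]) hδ
  rw [Metric.tendstoUniformlyOn_iff]
  intro ε hε
  set m := μ.real Set.univ
  obtain ⟨δ, hδ, hδε⟩ : ∃ δ > 0, δ ^ 2 * m < ε := by
    refine ⟨√(ε / (m + 1)), by positivity, ?_⟩
    rw [Real.sq_sqrt (by positivity), div_mul_eq_mul_div, div_lt_iff₀ (by positivity)]
    nlinarith
  obtain ⟨N, hN⟩ := exists_natDegree_le_eval_eq_one_norm_lt hK hKS hδ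
  filter_upwards [eventually_ge_atTop N] with n hn w hw
  obtain ⟨Q, hQN, hQw, hQS⟩ := hN w hw
  rw [dist_zero_left, Real.norm_of_nonneg (christoffel_nonneg μ n w)]
  exact (christoffel_le_of_norm_le μ (hQN.trans hn) hQw fun t ht => (hQS t ht).le).trans_lt hδε

/-- On compact subsets of the unbounded component `Ω` of the complement of the support,
the Christoffel functions tend to zero uniformly. -/
theorem stmt_14 (μ : Measure ℂ) [IsFiniteMeasure μ]
    (hc : IsCompact (msupp μ)) (hi : (msupp μ).Infinite)
    (Ω : Set ℂ) (z₀ : ℂ) (hz₀ : z₀ ∈ Ω)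
    (hΩ : Ω = connectedComponentIn (msupp μ)ᶜ z₀)
    (hΩunb : ¬ Bornology.IsBounded Ω)
    (K : Set ℂ) (hK : IsCompact K) (hKΩ : K ⊆ Ω) :
    TendstoUniformlyOn (fun n z => christoffel μ n z) (fun _ => 0) atTop K :=
  stmt_14_general μ hc Ω z₀ hΩ hΩunb K hK hKΩ
end
end
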